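/- Define the reach of a vertex v as reach(v) = max over all pairs (u,w) with v lying on the shortest path P_{uw} of min(d(u,v), d(v,w)). Let P be an α-relative locally optimal path from s to t and let v be a vertex on P. Then reach(v) ≥ min{ (α/2)·l(P), d(s,v), d(v,t) }. -/

import Mathlib

/-!
Let `r` be the left-hand side; we may assume `r > 0`. Walking from `v` along `P` in both
directions, stop at the first vertices `u`, `w` whose distance from `v` along `P` is at least `r`.
Dropping `u` and `w` leaves less than `r` on each side of `v`, so the subpath from `u` to `w` has
interior shorter than `2r ≤ α·l(P)` and is therefore a shortest path. Both of its halves are then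
shortest paths, so `d(u,v), d(v,w) ≥ r`, and the pair `u`, `w` witnesses `reach(v) ≥ r`.
-/

open List

variable {V : Type*}

/-- Length (cost) of a path given as a list of vertices, with edge weights `c`. -/
def pLen (c : V → V → ℝ) : List V → ℝ
  | [] => 0
  | [_] => 0
  | a :: b :: rest => c a b + pLen c (b :: rest)

/-- The pInterior of a path: the path with its two endpoints removed. -/
def pInterior (p : List V) : List V := (p.drop 1).dropLast

/-- A (nonempty) path is a shortest path if its length equals the shortest-path
distance `d` between its endpoints. -/
def IsShortestPath [Inhabited V] (c d : V → V → ℝ) (p : List V) : Prop :=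
  p ≠ [] ∧ pLen c p = d p.headI p.getLastI

/-- A path is `T`-locally optimal if every `T`-significant subpath (a nonempty
infix whose pInterior has length `< T`) is a shortest path. -/
def TLocOpt [Inhabited V] (c d : V → V → ℝ) (T : ℝ) (p : List V) : Prop :=
  ∀ q : List V, q ≠ [] → q <:+: p → pLen c (pInterior q) < T → IsShortestPath c d q

section Paths

variable {c : V → V → ℝ}

lemma pLen_append_cons (v : V) (y : List V) :
    ∀ x : List V, pLen c (x ++ v :: y) = pLen c (x ++ [v]) + pLen c (v :: y)
  | [] => by simp [pLen]
  | [a] => by simp [pLen]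
  | a :: b :: x => by
    change c a b + pLen c (b :: x ++ v :: y) = c a b + pLen c (b :: x ++ [v]) + _
    rw [pLen_append_cons v y (b :: x), add_assoc]

lemma pInterior_append_cons {a b : List V} (ha : a ≠ []) (hb : b ≠ []) (v : V) :
    pInterior (a ++ v :: b) = a.tail ++ v :: b.dropLast := by
  obtain ⟨x, a, rfl⟩ := List.exists_cons_of_ne_nil ha
  simp [pInterior, List.dropLast_append_of_ne_nil, List.dropLast_cons_of_ne_nil hb]

lemma exists_suffix_cut (v : V) {m : ℝ} (hm : 0 < m) :
    ∀ pre : List V, m ≤ pLen c (pre ++ [v]) →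
      ∃ p a, pre = p ++ a ∧ a ≠ [] ∧ m ≤ pLen c (a ++ [v]) ∧ pLen c (a.tail ++ [v]) < m
  | [], h => absurd h (by simpa [pLen] using hm)
  | x :: rest, h => by
    by_cases hrest : pLen c (rest ++ [v]) < m
    · exact ⟨[], x :: rest, rfl, List.cons_ne_nil _ _, h, hrest⟩
    · obtain ⟨p, a, rfl, ha, hma, hma'⟩ := exists_suffix_cut v hm rest (not_lt.mp hrest)
      exact ⟨x :: p, a, rfl, ha, hma, hma'⟩

lemma exists_prefix_cut :
    ∀ (suf : List V) (v : V) {m : ℝ}, 0 < m → m ≤ pLen c (v :: suf) →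
      ∃ b b', suf = b ++ b' ∧ b ≠ [] ∧ m ≤ pLen c (v :: b) ∧ pLen c (v :: b.dropLast) < m
  | [], _, _, hm, h => absurd h (by simpa [pLen] using hm)
  | x :: rest, v, m, hm, h => by
    change m ≤ c v x + pLen c (x :: rest) at h
    by_cases hx : m ≤ c v x
    · exact ⟨[x], rest, rfl, List.cons_ne_nil _ _, by simpa [pLen] using hx,
        by simpa [pLen] using hm⟩
    · obtain ⟨b, b', rfl, hb, hmb, hmb'⟩ :=
        exists_prefix_cut rest x (m := m - c v x) (by linarith) (by linarith)
      refine ⟨x :: b, b', rfl, List.cons_ne_nil _ _, ?_, ?_⟩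
      · change m ≤ c v x + pLen c (x :: b)
        linarith
      · rw [List.dropLast_cons_of_ne_nil hb]
        change c v x + pLen c (x :: b.dropLast) < m
        linarith

end Paths

section Distances

variable [Inhabited V] {c d : V → V → ℝ}

lemma dist_head_le_pLen
    (hlow : ∀ p : List V, p ≠ [] → d p.headI p.getLastI ≤ pLen c p) (x y : List V) (v : V) :
    d (x ++ v :: y).headI v ≤ pLen c (x ++ [v]) := by
  have hhead : (x ++ v :: y).headI = (x ++ [v]).headI := by cases x <;> rfl
  have hlast : (x ++ [v]).getLastI = v := by simp [List.getLastI_eq_getLast?_getD]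
  have h := hlow (x ++ [v]) (by simp)
  rwa [hlast, ← hhead] at h

lemma dist_last_le_pLen
    (hlow : ∀ p : List V, p ≠ [] → d p.headI p.getLastI ≤ pLen c p) (x y : List V) (v : V) :
    d v (x ++ v :: y).getLastI ≤ pLen c (v :: y) := by
  have h := hlow (v :: y) (List.cons_ne_nil _ _)
  rwa [List.getLastI_eq_getLast?_getD, List.getLast?_append_of_ne_nil _ (List.cons_ne_nil _ _),
    ← List.getLastI_eq_getLast?_getD]

lemma dist_self_eq_zero (hlow : ∀ p : List V, p ≠ [] → d p.headI p.getLastI ≤ pLen c p)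
    (htri : ∀ a b e : V, d a e ≤ d a b + d b e) (v : V) : d v v = 0 := by
  have h := hlow [v] (List.cons_ne_nil _ _)
  simp only [pLen, List.headI, List.getLastI] at h
  linarith [htri v v v]

lemma IsShortestPath.pLen_le_dist
    (hlow : ∀ p : List V, p ≠ [] → d p.headI p.getLastI ≤ pLen c p)
    (htri : ∀ a b e : V, d a e ≤ d a b + d b e)
    {x y : List V} {v : V} (h : IsShortestPath c d (x ++ v :: y)) :
    pLen c (x ++ [v]) ≤ d (x ++ v :: y).headI v ∧
      pLen c (v :: y) ≤ d v (x ++ v :: y).getLastI := by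
  have hsplit := pLen_append_cons (c := c) v y x
  have hu := dist_head_le_pLen hlow x y v
  have hw := dist_last_le_pLen hlow x y v
  have := htri (x ++ v :: y).headI v (x ++ v :: y).getLastI
  constructor <;> linarith [h.2]

end Distances

theorem stmt6_general [Inhabited V] (c d : V → V → ℝ)
    (hlow : ∀ p : List V, p ≠ [] → d p.headI p.getLastI ≤ pLen c p)
    (htri : ∀ a b e : V, d a e ≤ d a b + d b e)
    (α : ℝ)
    (s t v : V) (P : List V)
    (hs : P.headI = s) (ht : P.getLastI = t) (hv : v ∈ P)
    (hRLO : TLocOpt c d (α * pLen c P) P)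
    (reach : V → ℝ)
    (hreach : ∀ (u w : V) (q : List V), IsShortestPath c d q → q.headI = u →
      q.getLastI = w → v ∈ q → min (d u v) (d v w) ≤ reach v) :
    min (α / 2 * pLen c P) (min (d s v) (d v t)) ≤ reach v := by
  set r := min (α / 2 * pLen c P) (min (d s v) (d v t))
  have hrα : r ≤ α / 2 * pLen c P := min_le_left _ _
  have hreach_nonneg : 0 ≤ reach v := by
    have hvv := dist_self_eq_zero hlow htri v
    have hv_short : IsShortestPath c d [v] :=
      ⟨List.cons_ne_nil _ _, by simp [pLen, List.getLastI, hvv]⟩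
    simpa [hvv] using hreach v v [v] hv_short rfl rfl (List.mem_singleton_self v)
  rcases le_or_gt r 0 with hr | hr
  · exact hr.trans hreach_nonneg
  obtain ⟨pre, suf, rfl⟩ := List.append_of_mem hv
  subst hs ht
  have hr_pre : r ≤ pLen c (pre ++ [v]) :=
    (min_le_right _ _).trans ((min_le_left _ _).trans (dist_head_le_pLen hlow pre suf v))
  have hr_suf : r ≤ pLen c (v :: suf) :=
    (min_le_right _ _).trans ((min_le_right _ _).trans (dist_last_le_pLen hlow pre suf v))
  obtain ⟨p, a, rfl, ha, hra, hra'⟩ := exists_suffix_cut v hr pre hr_pre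
  obtain ⟨b, b', rfl, hb, hrb, hrb'⟩ := exists_prefix_cut suf v hr hr_suf
  have hq : IsShortestPath c d (a ++ v :: b) := by
    refine hRLO _ (by simp) ⟨p, b', by simp⟩ ?_
    rw [pInterior_append_cons ha hb, pLen_append_cons]
    linarith
  obtain ⟨hu, hw⟩ := hq.pLen_le_dist hlow htri
  exact (le_min (hra.trans hu) (hrb.trans hw)).trans (hreach _ _ _ hq rfl rfl (by simp))

/-- For an `α`-relative locally optimal `s`-`t` path `P` and a
vertex `v` on `P`, `reach(v) ≥ min{(α/2)·l(P), d(s,v), d(v,t)}`, where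
`reach` dominates `min(d(u,v), d(v,w))` over all shortest `u`-`w` paths
through `v`. -/
theorem stmt6 [Inhabited V] (c d : V → V → ℝ) (hc : ∀ a b, 0 ≤ c a b)
    (hlow : ∀ p : List V, p ≠ [] → d p.headI p.getLastI ≤ pLen c p)
    (htri : ∀ a b e : V, d a e ≤ d a b + d b e)
    (α : ℝ) (hα0 : 0 < α) (hα1 : α ≤ 1)
    (s t v : V) (P : List V) (hPne : P ≠ [])
    (hs : P.headI = s) (ht : P.getLastI = t) (hv : v ∈ P)
    (hRLO : TLocOpt c d (α * pLen c P) P)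
    (reach : V → ℝ)
    (hreach : ∀ (u w : V) (q : List V), IsShortestPath c d q → q.headI = u →
      q.getLastI = w → v ∈ q → min (d u v) (d v w) ≤ reach v) :
    min (α / 2 * pLen c P) (min (d s v) (d v t)) ≤ reach v :=
  stmt6_general c d hlow htri α s t v P hs ht hv hRLO reach hreach
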